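/- In every reachable blockchain state Γ=(W,L,p) of the lending-protocol state machine, the exchange rate satisfies X_L(τ) ≥ 1 for every base token τ. -/
import Mathlib


open scoped BigOperators Classical

namespace LendingProtocol

/-- Protocol parameters: liquidation threshold, liquidation reward, and the
interest-rate function, which depends only on the token and on the triple
(reserves, credit supply, debt supply). -/
structure Params (Token : Type) where
  Tliq : ℝ
  Rliq : ℝ
  intr : Token → ℝ → ℝ → ℝ → ℝ
  Tliq_pos : 0 < Tliq
  Tliq_lt_one : Tliq < 1
  one_lt_Rliq : 1 < Rliq
  intr_pos : ∀ τ r s d, 0 < intr τ r s d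

/-- State of the lending pool: reserves, credits and debts (nonnegative,
with finite support). -/
structure LPState (User Token : Type) where
  res : Token → ℝ
  cr : Token → User → ℝ
  db : Token → User → ℝ
  res_nonneg : ∀ τ, 0 ≤ res τ
  cr_nonneg : ∀ τ a, 0 ≤ cr τ a
  db_nonneg : ∀ τ a, 0 ≤ db τ a
  res_fin : (Function.support res).Finite
  cr_fin : (Function.support (Function.uncurry cr)).Finite
  db_fin : (Function.support (Function.uncurry db)).Finite

/-- A blockchain state: wallets, LP state, and (strictly positive) prices. -/
structure Conf (User Token : Type) where
  wal : Token → User → ℝ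
  lp : LPState User Token
  price : Token → ℝ
  wal_nonneg : ∀ τ a, 0 ≤ wal τ a
  wal_fin : (Function.support (Function.uncurry wal)).Finite
  price_pos : ∀ τ, 0 < price τ

variable {User Token : Type}

/-- Credit supply S(τ). -/
noncomputable def creditSupply (L : LPState User Token) (τ : Token) : ℝ := ∑ᶠ a, L.cr τ a

/-- Debt supply D(τ). -/
noncomputable def debtSupply (L : LPState User Token) (τ : Token) : ℝ := ∑ᶠ a, L.db τ a

/-- Exchange rate X_L(τ). -/
noncomputable def exch (L : LPState User Token) (τ : Token) : ℝ :=
  if creditSupply L τ = 0 then 1 else (L.res τ + debtSupply L τ) / creditSupply L τ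

/-- Interest rate I_L(τ). -/
noncomputable def rate (P : Params Token) (L : LPState User Token) (τ : Token) : ℝ :=
  P.intr τ (L.res τ) (creditSupply L τ) (debtSupply L τ)

/-- Credit value of a user. -/
noncomputable def Cval (Γ : Conf User Token) (a : User) : ℝ :=
  ∑ᶠ τ, Γ.lp.cr τ a * exch Γ.lp τ * Γ.price τ

/-- Debt value of a user. -/
noncomputable def Dval (Γ : Conf User Token) (a : User) : ℝ :=
  ∑ᶠ τ, Γ.lp.db τ a * Γ.price τ

/-- Health factor, valued in ℝ ∪ {+∞}. -/
noncomputable def Health (P : Params Token) (Γ : Conf User Token) (a : User) : EReal :=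
  if 0 < Dval Γ a then ((P.Tliq * Cval Γ a / Dval Γ a : ℝ) : EReal) else ⊤

/-- Net worth of a user. -/
noncomputable def Wealth (Γ : Conf User Token) (a : User) : ℝ :=
  (∑ᶠ τ, Γ.wal τ a * Γ.price τ) + Cval Γ a - Dval Γ a

/-- Transaction labels. -/
inductive Tx (User Token : Type) where
  | dep (a : User) (v : ℝ) (τ : Token)
  | bor (a : User) (v : ℝ) (τ : Token)
  | rep (a : User) (v : ℝ) (τ : Token)
  | rdm (a : User) (w : ℝ) (τ : Token)
  | liq (a : User) (b : User) (v : ℝ) (τ0 : Token) (τ1 : Token)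
  | int
  | px (δ : ℝ) (τ : Token)
  | swp (a : User) (v : ℝ) (τ0 : Token) (τ1 : Token)

/-- Pointwise update of a one-argument function. -/
noncomputable def upd1 {α : Type} (f : α → ℝ) (x : α) (y : ℝ) : α → ℝ :=
  fun x' => if x' = x then y else f x'

/-- Pointwise update of a two-argument function. -/
noncomputable def upd2 {α β : Type} (f : α → β → ℝ) (x : α) (z : β) (y : ℝ) : α → β → ℝ :=
  fun x' z' => if x' = x ∧ z' = z then y else f x' z'

/-- The labelled transition relation of the lending protocol. -/
inductive Step (P : Params Token) : Conf User Token → Tx User Token → Conf User Token → Prop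
  | dep {Γ Γ' : Conf User Token} {a : User} {v : ℝ} {τ : Token}
      (hv : 0 < v) (hw : v ≤ Γ.wal τ a)
      (hwal : Γ'.wal = upd2 Γ.wal τ a (Γ.wal τ a - v))
      (hres : Γ'.lp.res = upd1 Γ.lp.res τ (Γ.lp.res τ + v))
      (hcr : Γ'.lp.cr = upd2 Γ.lp.cr τ a (Γ.lp.cr τ a + v / exch Γ.lp τ))
      (hdb : Γ'.lp.db = Γ.lp.db)
      (hp : Γ'.price = Γ.price) :
      Step P Γ (Tx.dep a v τ) Γ'
  | bor {Γ Γ' : Conf User Token} {a : User} {v : ℝ} {τ : Token}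
      (hv : 0 < v) (hres0 : v ≤ Γ.lp.res τ)
      (hwal : Γ'.wal = upd2 Γ.wal τ a (Γ.wal τ a + v))
      (hres : Γ'.lp.res = upd1 Γ.lp.res τ (Γ.lp.res τ - v))
      (hcr : Γ'.lp.cr = Γ.lp.cr)
      (hdb : Γ'.lp.db = upd2 Γ.lp.db τ a (Γ.lp.db τ a + v))
      (hp : Γ'.price = Γ.price)
      (hH : (1 : EReal) ≤ Health P Γ' a) :
      Step P Γ (Tx.bor a v τ) Γ'
  | rep {Γ Γ' : Conf User Token} {a : User} {v : ℝ} {τ : Token}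
      (hv : 0 < v) (hw : v ≤ Γ.wal τ a) (hd : v ≤ Γ.lp.db τ a)
      (hwal : Γ'.wal = upd2 Γ.wal τ a (Γ.wal τ a - v))
      (hres : Γ'.lp.res = upd1 Γ.lp.res τ (Γ.lp.res τ + v))
      (hcr : Γ'.lp.cr = Γ.lp.cr)
      (hdb : Γ'.lp.db = upd2 Γ.lp.db τ a (Γ.lp.db τ a - v))
      (hp : Γ'.price = Γ.price) :
      Step P Γ (Tx.rep a v τ) Γ'
  | rdm {Γ Γ' : Conf User Token} {a : User} {w : ℝ} {τ : Token}
      (hw : 0 < w) (hcr0 : w ≤ Γ.lp.cr τ a) (hres0 : w * exch Γ.lp τ ≤ Γ.lp.res τ)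
      (hwal : Γ'.wal = upd2 Γ.wal τ a (Γ.wal τ a + w * exch Γ.lp τ))
      (hres : Γ'.lp.res = upd1 Γ.lp.res τ (Γ.lp.res τ - w * exch Γ.lp τ))
      (hcr : Γ'.lp.cr = upd2 Γ.lp.cr τ a (Γ.lp.cr τ a - w))
      (hdb : Γ'.lp.db = Γ.lp.db)
      (hp : Γ'.price = Γ.price)
      (hH : (1 : EReal) ≤ Health P Γ' a) :
      Step P Γ (Tx.rdm a w τ) Γ'
  | liq {Γ Γ' : Conf User Token} {a b : User} {v : ℝ} {τ0 τ1 : Token}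
      (hab : a ≠ b) (hv : 0 < v) (hwa : v ≤ Γ.wal τ0 a) (hdbb : v ≤ Γ.lp.db τ0 b)
      (hHb : Health P Γ b < 1)
      (hcrb : (v / exch Γ.lp τ1) * (Γ.price τ0 / Γ.price τ1) * P.Rliq ≤ Γ.lp.cr τ1 b)
      (hHb' : Health P Γ' b ≤ 1)
      (hwal : Γ'.wal = upd2 Γ.wal τ0 a (Γ.wal τ0 a - v))
      (hres : Γ'.lp.res = upd1 Γ.lp.res τ0 (Γ.lp.res τ0 + v))
      (hdb : Γ'.lp.db = upd2 Γ.lp.db τ0 b (Γ.lp.db τ0 b - v))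
      (hcr : Γ'.lp.cr =
        upd2 (upd2 Γ.lp.cr τ1 b
            (Γ.lp.cr τ1 b - (v / exch Γ.lp τ1) * (Γ.price τ0 / Γ.price τ1) * P.Rliq)) τ1 a
          (Γ.lp.cr τ1 a + (v / exch Γ.lp τ1) * (Γ.price τ0 / Γ.price τ1) * P.Rliq))
      (hp : Γ'.price = Γ.price) :
      Step P Γ (Tx.liq a b v τ0 τ1) Γ'
  | int {Γ Γ' : Conf User Token}
      (hwal : Γ'.wal = Γ.wal)
      (hres : Γ'.lp.res = Γ.lp.res)
      (hcr : Γ'.lp.cr = Γ.lp.cr)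
      (hdb : Γ'.lp.db = fun τ a => Γ.lp.db τ a + Γ.lp.db τ a * rate P Γ.lp τ)
      (hp : Γ'.price = Γ.price) :
      Step P Γ Tx.int Γ'
  | px {Γ Γ' : Conf User Token} {δ : ℝ} {τ : Token}
      (hδ : δ ≠ 0) (hpos : 0 < Γ.price τ + δ)
      (hwal : Γ'.wal = Γ.wal) (hlp : Γ'.lp = Γ.lp)
      (hp : Γ'.price = upd1 Γ.price τ (Γ.price τ + δ)) :
      Step P Γ (Tx.px δ τ) Γ'
  | swp {Γ Γ' : Conf User Token} {a : User} {v : ℝ} {τ0 τ1 : Token}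
      (hne : τ0 ≠ τ1) (hv : 0 < v) (hw : v ≤ Γ.wal τ0 a)
      (hwal : Γ'.wal = upd2 (upd2 Γ.wal τ0 a (Γ.wal τ0 a - v)) τ1 a
        (Γ.wal τ1 a + v * Γ.price τ0 / Γ.price τ1))
      (hlp : Γ'.lp = Γ.lp) (hp : Γ'.price = Γ.price) :
      Step P Γ (Tx.swp a v τ0 τ1) Γ'

/-- Execution of a sequence of transactions; transactions that are not
enabled when their turn comes are skipped. -/
inductive Steps (P : Params Token) :
    Conf User Token → List (Tx User Token) → Conf User Token → Prop
  | nil (Γ : Conf User Token) : Steps P Γ [] Γ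
  | cons {Γ Γ' Γ'' : Conf User Token} {tx : Tx User Token} {txs : List (Tx User Token)} :
      Step P Γ tx Γ' → Steps P Γ' txs Γ'' → Steps P Γ (tx :: txs) Γ''
  | skip {Γ Γ'' : Conf User Token} {tx : Tx User Token} {txs : List (Tx User Token)} :
      (∀ Δ, ¬ Step P Γ tx Δ) → Steps P Γ txs Γ'' → Steps P Γ (tx :: txs) Γ''

/-- Initial states: the LP holds no reserves, no credits, no debts. -/
def Initial (Γ : Conf User Token) : Prop :=
  (∀ τ, Γ.lp.res τ = 0) ∧ (∀ τ a, Γ.lp.cr τ a = 0) ∧ (∀ τ a, Γ.lp.db τ a = 0)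

/-- Reflexive-transitive closure of the step relation. -/
inductive Run (P : Params Token) : Conf User Token → Conf User Token → Prop
  | refl (Γ : Conf User Token) : Run P Γ Γ
  | tail {Γ Γ' Γ'' : Conf User Token} {tx : Tx User Token} :
      Run P Γ Γ' → Step P Γ' tx Γ'' → Run P Γ Γ''

/-- Reachability from some initial state. -/
def Reachable (P : Params Token) (Γ : Conf User Token) : Prop :=
  ∃ Γ0, Initial Γ0 ∧ Run P Γ0 Γ

/-! ### Auxiliary lemmas for the invariant proof -/

lemma suppFin_curry {f : Token → User → ℝ}
    (hf : (Function.support (Function.uncurry f)).Finite) (τ : Token) :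
    (Function.support (f τ)).Finite := by
  have hsub : Function.support (f τ)
      ⊆ (fun a => (τ, a)) ⁻¹' Function.support (Function.uncurry f) := by
    intro a ha
    simpa [Function.uncurry] using ha
  exact (hf.preimage (Function.Injective.injOn (fun a b h => by simpa using h))).subset hsub

lemma suppFin_update {f : User → ℝ} (hf : (Function.support f).Finite) (x : User) (y : ℝ) :
    (Function.support fun a' => if a' = x then y else f a').Finite := by
  refine (hf.union (Set.finite_singleton x)).subset ?_
  intro z hz
  by_cases h : z = x
  · exact Or.inr h
  · left; simpa [Function.mem_support, h] using hz

lemma finsum_update {f : User → ℝ} (hf : (Function.support f).Finite) (a : User) (y : ℝ) :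
    ∑ᶠ a', (if a' = a then y else f a') = (∑ᶠ a', f a') + (y - f a) := by
  have h1 : (fun a' => if a' = a then y else f a')
      = fun a' => f a' + (if a' = a then y - f a' else 0) := by
    funext a'; by_cases h : a' = a <;> simp [h]
  have hg : (Function.support fun a' => if a' = a then y - f a' else 0).Finite := by
    refine (Set.finite_singleton a).subset ?_
    intro z hz
    by_cases h : z = a
    · exact h
    · simp [Function.mem_support, h] at hz
  calc ∑ᶠ a', (if a' = a then y else f a')
      = ∑ᶠ a', (f a' + if a' = a then y - f a' else 0) := by rw [h1]
    _ = (∑ᶠ a', f a') + ∑ᶠ a', (if a' = a then y - f a' else 0) := finsum_add_distrib hf hg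
    _ = (∑ᶠ a', f a') + (y - f a) := by
        rw [finsum_eq_single _ a (fun j hj => if_neg hj), if_pos rfl]

lemma suppFin_upd2 {f : Token → User → ℝ} (hf : ∀ τ', (Function.support (f τ')).Finite)
    (τ : Token) (a : User) (y : ℝ) (τ' : Token) :
    (Function.support (upd2 f τ a y τ')).Finite := by
  by_cases hτ : τ' = τ
  · subst hτ
    have h : upd2 f τ' a y τ' = fun a' => if a' = a then y else f τ' a' := by
      funext a'; simp [upd2]
    rw [h]; exact suppFin_update (hf τ') a y
  · have h : upd2 f τ a y τ' = f τ' := by funext a'; simp [upd2, hτ]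
    rw [h]; exact hf τ'

lemma finsum_upd2 {f : Token → User → ℝ} (hf : ∀ τ', (Function.support (f τ')).Finite)
    (τ : Token) (a : User) (y : ℝ) (τ' : Token) :
    ∑ᶠ a', upd2 f τ a y τ' a'
      = if τ' = τ then (∑ᶠ a', f τ a') + (y - f τ a) else ∑ᶠ a', f τ' a' := by
  by_cases hτ : τ' = τ
  · subst hτ
    rw [if_pos rfl,
      finsum_congr (fun a' => (by simp [upd2] :
        upd2 f τ' a y τ' a' = if a' = a then y else f τ' a'))]
    exact finsum_update (hf τ') a y
  · rw [if_neg hτ,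
      finsum_congr (fun a' => (by simp [upd2, hτ] : upd2 f τ a y τ' a' = f τ' a'))]

lemma creditSupply_nonneg (L : LPState User Token) (τ : Token) : 0 ≤ creditSupply L τ :=
  finsum_nonneg fun a => L.cr_nonneg τ a

lemma debtSupply_nonneg (L : LPState User Token) (τ : Token) : 0 ≤ debtSupply L τ :=
  finsum_nonneg fun a => L.db_nonneg τ a

lemma le_creditSupply (L : LPState User Token) (τ : Token) (a : User) :
    L.cr τ a ≤ creditSupply L τ :=
  single_le_finsum a (suppFin_curry L.cr_fin τ) (fun a' => L.cr_nonneg τ a')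

/-- The invariant: credit supply is at most reserves plus debt supply. -/
def GoodLP (L : LPState User Token) : Prop :=
  ∀ τ, creditSupply L τ ≤ L.res τ + debtSupply L τ

lemma exch_ge_one {L : LPState User Token} (h : GoodLP L) (τ : Token) : 1 ≤ exch L τ := by
  unfold exch
  split_ifs with hS
  · exact le_refl 1
  · have hS0 : 0 < creditSupply L τ := (creditSupply_nonneg L τ).lt_of_ne (Ne.symm hS)
    exact (one_le_div hS0).mpr (h τ)

lemma step_good {P : Params Token} {Γ Γ' : Conf User Token} {tx : Tx User Token}
    (hstep : Step P Γ tx Γ') (hg : GoodLP Γ.lp) : GoodLP Γ'.lp := by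
  have hfcr := fun τ' => suppFin_curry Γ.lp.cr_fin τ'
  have hfdb := fun τ' => suppFin_curry Γ.lp.db_fin τ'
  cases hstep with
  | dep hv hw hwal hres hcr hdb hp =>
    rename_i a v τ
    intro τ'
    have hS' : creditSupply Γ'.lp τ'
        = if τ' = τ then creditSupply Γ.lp τ + ((Γ.lp.cr τ a + v / exch Γ.lp τ) - Γ.lp.cr τ a)
          else creditSupply Γ.lp τ' := by
      unfold creditSupply; rw [hcr]; exact finsum_upd2 hfcr τ a _ τ'
    have hD' : debtSupply Γ'.lp τ' = debtSupply Γ.lp τ' := by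
      unfold debtSupply; rw [hdb]
    have hR' : Γ'.lp.res τ' = if τ' = τ then Γ.lp.res τ + v else Γ.lp.res τ' := by
      rw [hres]; simp [upd1]
    rw [hS', hD', hR']
    by_cases hττ : τ' = τ
    · subst hττ
      rw [if_pos rfl, if_pos rfl]
      have h1 := hg τ'
      have h2 : v / exch Γ.lp τ' ≤ v := div_le_self hv.le (exch_ge_one hg τ')
      linarith
    · rw [if_neg hττ, if_neg hττ]; exact hg τ'
  | bor hv hres0 hwal hres hcr hdb hp hH =>
    rename_i a v τ
    intro τ'
    have hS' : creditSupply Γ'.lp τ' = creditSupply Γ.lp τ' := by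
      unfold creditSupply; rw [hcr]
    have hD' : debtSupply Γ'.lp τ'
        = if τ' = τ then debtSupply Γ.lp τ + ((Γ.lp.db τ a + v) - Γ.lp.db τ a)
          else debtSupply Γ.lp τ' := by
      unfold debtSupply; rw [hdb]; exact finsum_upd2 hfdb τ a _ τ'
    have hR' : Γ'.lp.res τ' = if τ' = τ then Γ.lp.res τ - v else Γ.lp.res τ' := by
      rw [hres]; simp [upd1]
    rw [hS', hD', hR']
    by_cases hττ : τ' = τ
    · subst hττ; rw [if_pos rfl, if_pos rfl]; have := hg τ'; linarith
    · rw [if_neg hττ, if_neg hττ]; exact hg τ'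
  | rep hv hw hd hwal hres hcr hdb hp =>
    rename_i a v τ
    intro τ'
    have hS' : creditSupply Γ'.lp τ' = creditSupply Γ.lp τ' := by
      unfold creditSupply; rw [hcr]
    have hD' : debtSupply Γ'.lp τ'
        = if τ' = τ then debtSupply Γ.lp τ + ((Γ.lp.db τ a - v) - Γ.lp.db τ a)
          else debtSupply Γ.lp τ' := by
      unfold debtSupply; rw [hdb]; exact finsum_upd2 hfdb τ a _ τ'
    have hR' : Γ'.lp.res τ' = if τ' = τ then Γ.lp.res τ + v else Γ.lp.res τ' := by
      rw [hres]; simp [upd1]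
    rw [hS', hD', hR']
    by_cases hττ : τ' = τ
    · subst hττ; rw [if_pos rfl, if_pos rfl]; have := hg τ'; linarith
    · rw [if_neg hττ, if_neg hττ]; exact hg τ'
  | rdm hw hcr0 hres0 hwal hres hcr hdb hp hH =>
    rename_i a w τ
    intro τ'
    have hS' : creditSupply Γ'.lp τ'
        = if τ' = τ then creditSupply Γ.lp τ + ((Γ.lp.cr τ a - w) - Γ.lp.cr τ a)
          else creditSupply Γ.lp τ' := by
      unfold creditSupply; rw [hcr]; exact finsum_upd2 hfcr τ a _ τ'
    have hD' : debtSupply Γ'.lp τ' = debtSupply Γ.lp τ' := by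
      unfold debtSupply; rw [hdb]
    have hR' : Γ'.lp.res τ'
        = if τ' = τ then Γ.lp.res τ - w * exch Γ.lp τ else Γ.lp.res τ' := by
      rw [hres]; simp [upd1]
    rw [hS', hD', hR']
    by_cases hττ : τ' = τ
    · subst hττ
      rw [if_pos rfl, if_pos rfl]
      have hwS : w ≤ creditSupply Γ.lp τ' := le_trans hcr0 (le_creditSupply Γ.lp τ' a)
      have hSpos : 0 < creditSupply Γ.lp τ' := lt_of_lt_of_le hw hwS
      have hXdef : exch Γ.lp τ' = (Γ.lp.res τ' + debtSupply Γ.lp τ') / creditSupply Γ.lp τ' := by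
        simp [exch, hSpos.ne']
      have hXS : exch Γ.lp τ' * creditSupply Γ.lp τ'
          = Γ.lp.res τ' + debtSupply Γ.lp τ' := by
        rw [hXdef]; field_simp
      have hX1 : 1 ≤ exch Γ.lp τ' := exch_ge_one hg τ'
      nlinarith [mul_nonneg (sub_nonneg.2 hwS) (sub_nonneg.2 hX1)]
    · rw [if_neg hττ, if_neg hττ]; exact hg τ'
  | liq hab hv hwa hdbb hHb hcrb hHb' hwal hres hdb hcr hp =>
    rename_i a b v τ0 τ1
    intro τ'
    set w1 := (v / exch Γ.lp τ1) * (Γ.price τ0 / Γ.price τ1) * P.Rliq with hw1def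
    have hgfin : ∀ σ, (Function.support (upd2 Γ.lp.cr τ1 b (Γ.lp.cr τ1 b - w1) σ)).Finite :=
      suppFin_upd2 hfcr τ1 b _
    have hS' : creditSupply Γ'.lp τ' = creditSupply Γ.lp τ' := by
      unfold creditSupply
      rw [hcr, finsum_upd2 hgfin τ1 a _ τ']
      by_cases h1 : τ' = τ1
      · subst h1
        rw [if_pos rfl, finsum_upd2 hfcr τ' b _ τ', if_pos rfl]
        have hga : upd2 Γ.lp.cr τ' b (Γ.lp.cr τ' b - w1) τ' a = Γ.lp.cr τ' a := by
          simp [upd2, hab]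
        rw [hga]; ring
      · rw [if_neg h1, finsum_upd2 hfcr τ1 b _ τ', if_neg h1]
    have hD' : debtSupply Γ'.lp τ'
        = if τ' = τ0 then debtSupply Γ.lp τ0 + ((Γ.lp.db τ0 b - v) - Γ.lp.db τ0 b)
          else debtSupply Γ.lp τ' := by
      unfold debtSupply; rw [hdb]; exact finsum_upd2 hfdb τ0 b _ τ'
    have hR' : Γ'.lp.res τ' = if τ' = τ0 then Γ.lp.res τ0 + v else Γ.lp.res τ' := by
      rw [hres]; simp [upd1]
    rw [hS', hD', hR']
    by_cases h0 : τ' = τ0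
    · subst h0; rw [if_pos rfl, if_pos rfl]; have := hg τ'; linarith
    · rw [if_neg h0, if_neg h0]; exact hg τ'
  | int hwal hres hcr hdb hp =>
    intro τ'
    have hS' : creditSupply Γ'.lp τ' = creditSupply Γ.lp τ' := by
      unfold creditSupply; rw [hcr]
    have hsupp : (Function.support fun a => Γ.lp.db τ' a * rate P Γ.lp τ').Finite := by
      refine (hfdb τ').subset ?_
      intro z hz
      simp only [Function.mem_support] at hz ⊢
      intro h; exact hz (by rw [h, zero_mul])
    have hE0 : 0 ≤ ∑ᶠ a, Γ.lp.db τ' a * rate P Γ.lp τ' :=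
      finsum_nonneg fun a => mul_nonneg (Γ.lp.db_nonneg τ' a) (P.intr_pos τ' _ _ _).le
    have hD' : debtSupply Γ'.lp τ'
        = debtSupply Γ.lp τ' + ∑ᶠ a, Γ.lp.db τ' a * rate P Γ.lp τ' := by
      unfold debtSupply
      rw [hdb]
      exact finsum_add_distrib (hfdb τ') hsupp
    rw [hS', hD', hres]
    have := hg τ'
    linarith
  | px hδ hpos hwal hlp hp =>
    exact hlp ▸ hg
  | swp hne hv hw hwal hlp hp =>
    exact hlp ▸ hg

lemma run_good {P : Params Token} {Γ0 Γ : Conf User Token}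
    (h : Run P Γ0 Γ) (h0 : GoodLP Γ0.lp) : GoodLP Γ.lp := by
  induction h with
  | refl => exact h0
  | tail hr hs ih => exact step_good hs ih

end LendingProtocol

/-- in every reachable state the exchange rate of every token is ≥ 1. -/
theorem exchange_rate_ge_one {User Token : Type}
    (P : LendingProtocol.Params Token)
    (Γ : LendingProtocol.Conf User Token)
    (h : LendingProtocol.Reachable P Γ) (τ : Token) :
    1 ≤ LendingProtocol.exch Γ.lp τ := by
  obtain ⟨Γ0, hinit, hrun⟩ := h
  have h0 : LendingProtocol.GoodLP Γ0.lp := by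
    intro τ'
    have h1 : LendingProtocol.creditSupply Γ0.lp τ' = 0 := by
      simp [LendingProtocol.creditSupply, hinit.2.1]
    have h2 : LendingProtocol.debtSupply Γ0.lp τ' = 0 := by
      simp [LendingProtocol.debtSupply, hinit.2.2]
    rw [h1, h2, hinit.1 τ']; norm_num
  exact LendingProtocol.exch_ge_one (LendingProtocol.run_good hrun h0) τ
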